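/- arXiv:2511.19289 — 2 statements merged into one kernel-verified Lean document; each statement's English description precedes it below -/
import Mathlib

section
/- Let λ₁,…,λ_d be real numbers with |λ_j| ≤ log b for all j, where b ≥ 1. Then the Lagrange interpolation polynomial p(x) = Σ_{j=1}^d λ_j ∏_{i≠j} (d·x − i)/(j − i) is a polynomial of degree at most d−1 satisfying p(i/d) = λ_i for all i ∈ {1,…,d}, and every coefficient a_ℓ of p satisfies |a_ℓ| ≤ (3e)^d (log b)/(2π). -/
/-!
The polynomial is the Lagrange interpolant at the nodes `i / d`, which gives the degree bound and
the interpolation property. Each coefficient of `∏_{i ≠ j} (d X - i)` is at most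
`∏_{i ≠ j} (d + i)` in absolute value, and `∏_{i ≠ j} |j - i| = (j - 1)! (d - j)!`, so the
coefficients of the `j`-th basis polynomial are at most `C(2d, d) C(d - 1, j - 1) d / (d + j)`.
Summing over `j` gives at most `C(2d, d) 2^(d - 1) d / (d + 1)`, and the elementary estimate
`C(2d, d)² (3d + 1) ≤ 16^d` together with `π² < 10` and `8 ≤ 3e` bounds this by
`(3e)^d / (2π)`.
-/

open Polynomial Real Finset Nat

theorem norm_inv_sub_div_mul_one_add {K : Type*} [NormedField K] {c : K} (hc : c ≠ 0) (x y : K) :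
    ‖(x / c - y / c)⁻¹‖ * (1 + ‖y / c‖) = (‖c‖ + ‖y‖) / ‖x - y‖ := by
  rw [← sub_div, inv_div, norm_div, norm_div]
  field_simp

namespace Polynomial

theorem norm_coeff_X_sub_C_mul_le {R : Type*} [NormedRing R] {q : R[X]} {M : ℝ}
    (hq : ∀ n, ‖q.coeff n‖ ≤ M) (a : R) (n : ℕ) :
    ‖((X - C a) * q).coeff n‖ ≤ (1 + ‖a‖) * M := by
  have hXq : ‖(X * q).coeff n‖ ≤ M := by
    cases n with
    | zero => simpa using (norm_nonneg _).trans (hq 0)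
    | succ n => simpa [coeff_X_mul] using hq n
  calc ‖((X - C a) * q).coeff n‖ = ‖(X * q).coeff n - a * q.coeff n‖ := by
        rw [sub_mul, coeff_sub, coeff_C_mul]
    _ ≤ ‖(X * q).coeff n‖ + ‖a‖ * ‖q.coeff n‖ :=
        (norm_sub_le _ _).trans (by gcongr; exact norm_mul_le _ _)
    _ ≤ (1 + ‖a‖) * M := by nlinarith [norm_nonneg a, hq n]

theorem norm_coeff_prod_C_mul_X_sub_C_le {R ι : Type*} [NormedCommRing R] [NormOneClass R]
    (s : Finset ι) (c a : ι → R) (n : ℕ) :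
    ‖(∏ i ∈ s, C (c i) * (X - C (a i))).coeff n‖ ≤
      ∏ i ∈ s, ‖c i‖ * (1 + ‖a i‖) := by
  classical
  induction s using Finset.induction_on generalizing n with
  | empty => by_cases h : n = 0 <;> simp [coeff_one, h]
  | insert i s hi ih =>
    rw [prod_insert hi, prod_insert hi, mul_assoc, coeff_C_mul, mul_assoc]
    exact (norm_mul_le _ _).trans (by gcongr; exact norm_coeff_X_sub_C_mul_le ih _ n)

end Polynomial

namespace Lagrange

variable {K ι : Type*} [DecidableEq ι]

theorem basisDivisor_div_div [Field K] {c : K} (hc : c ≠ 0) (x y : K) :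
    basisDivisor (x / c) (y / c) = C (x - y)⁻¹ * (C c * X - C y) := by
  rw [basisDivisor, ← sub_div, inv_div, div_eq_inv_mul, C_mul, mul_assoc, mul_sub, ← C_mul,
    mul_div_cancel₀ _ hc]

theorem interpolate_div_const [Field K] (s : Finset ι) (x r : ι → K) {c : K} (hc : c ≠ 0) :
    interpolate s (fun i => x i / c) r =
      ∑ j ∈ s, C (r j) * ∏ i ∈ s.erase j, C (x j - x i)⁻¹ * (C c * X - C (x i)) := by
  simp only [interpolate_apply, Lagrange.basis, basisDivisor_div_div hc]

theorem norm_coeff_interpolate_le [NormedField K] (s : Finset ι) (v r : ι → K) (n : ℕ) :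
    ‖(interpolate s v r).coeff n‖ ≤
      ∑ j ∈ s, ‖r j‖ * ∏ i ∈ s.erase j, ‖(v j - v i)⁻¹‖ * (1 + ‖v i‖) := by
  rw [interpolate_apply, finsetSum_coeff]
  refine (norm_sum_le _ _).trans (sum_le_sum fun j _ => ?_)
  rw [coeff_C_mul, norm_mul]
  exact mul_le_mul_of_nonneg_left (norm_coeff_prod_C_mul_X_sub_C_le _ _ _ n) (norm_nonneg _)

end Lagrange

namespace Nat

theorem centralBinom_sq_mul_le (n : ℕ) : n.centralBinom ^ 2 * (3 * n + 1) ≤ 16 ^ n := by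
  induction n with
  | zero => simp
  | succ n ih =>
    have hpoly : (2 * n + 1) ^ 2 * (3 * n + 4) ≤ 4 * (n + 1) ^ 2 * (3 * n + 1) := by
      ring_nf; omega
    refine Nat.le_of_mul_le_mul_left ?_ (pow_pos n.succ_pos 2)
    calc (n + 1) ^ 2 * ((n + 1).centralBinom ^ 2 * (3 * (n + 1) + 1))
        = 4 * ((2 * n + 1) ^ 2 * (3 * n + 4)) * n.centralBinom ^ 2 := by
          rw [← mul_assoc, ← mul_pow, succ_mul_centralBinom_succ]; ring
      _ ≤ 4 * (4 * (n + 1) ^ 2 * (3 * n + 1)) * n.centralBinom ^ 2 := by gcongr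
      _ = 16 * (n + 1) ^ 2 * (n.centralBinom ^ 2 * (3 * n + 1)) := by ring
      _ ≤ 16 * (n + 1) ^ 2 * 16 ^ n := by gcongr
      _ = (n + 1) ^ 2 * 16 ^ (n + 1) := by ring

theorem factorial_mul_prod_Icc_add (d : ℕ) : d ! * ∏ i ∈ Icc 1 d, (d + i) = (2 * d)! := by
  rw [← Finset.Ico_add_one_right_eq_Icc, prod_Ico_eq_prod_range, two_mul,
    ← factorial_mul_ascFactorial, ascFactorial_eq_prod_range]
  simp only [add_tsub_cancel_right, add_assoc, add_comm 1]

theorem sum_Icc_choose_pred {d : ℕ} (hd : 1 ≤ d) :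
    ∑ j ∈ Icc 1 d, (d - 1).choose (j - 1) = 2 ^ (d - 1) := by
  obtain ⟨m, rfl⟩ := Nat.exists_eq_add_of_le' hd
  rw [← Finset.Ico_add_one_right_eq_Icc, sum_Ico_eq_sum_range]
  simpa using sum_range_choose m

end Nat

theorem pi_mul_centralBinom_le (n : ℕ) : π * n * n.centralBinom ≤ (n + 1) * 4 ^ n := by
  have hC : (n.centralBinom : ℝ) ^ 2 * (3 * n + 1) ≤ 16 ^ n := by
    exact_mod_cast Nat.centralBinom_sq_mul_le n
  have hπ : π ^ 2 * n ^ 2 ≤ (n + 1) ^ 2 * (3 * n + 1) := by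
    have : π ^ 2 < 10 := by nlinarith [pi_lt_d2, pi_pos]
    have hn : (0 : ℝ) ≤ n := n.cast_nonneg
    nlinarith [pow_nonneg hn 3]
  refine (pow_le_pow_iff_left₀ (by positivity) (by positivity) two_ne_zero).mp ?_
  calc (π * n * n.centralBinom) ^ 2 = π ^ 2 * n ^ 2 * (n.centralBinom : ℝ) ^ 2 := by ring
    _ ≤ (n + 1) ^ 2 * (3 * n + 1) * (n.centralBinom : ℝ) ^ 2 := by gcongr
    _ = (n + 1) ^ 2 * ((n.centralBinom : ℝ) ^ 2 * (3 * n + 1)) := by ring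
    _ ≤ (n + 1) ^ 2 * 16 ^ n := by gcongr
    _ = ((n + 1) * 4 ^ n) ^ 2 := by rw [mul_pow, ← pow_mul, mul_comm n 2, pow_mul]; norm_num

theorem prod_erase_Icc_abs_sub {d j : ℕ} (hj : j ∈ Icc 1 d) :
    ∏ i ∈ (Icc 1 d).erase j, |(j : ℝ) - i| = (j - 1)! * (d - j)! := by
  obtain ⟨hj1, hjd⟩ := mem_Icc.mp hj
  have hsplit : (Icc 1 d).erase j = Ico 1 j ∪ Ioc j d := by ext; simp; omega
  rw [hsplit, prod_union (disjoint_left.mpr fun i h1 h2 => by simp at h1 h2; omega)]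
  congr 1
  · calc ∏ i ∈ Ico 1 j, |(j : ℝ) - i| = ∏ i ∈ Ico 1 j, ((j - i : ℕ) : ℝ) :=
          prod_congr rfl fun i hi => by
            have hij := (mem_Ico.mp hi).2.le
            rw [cast_sub hij, abs_of_nonneg (by simpa using hij)]
      _ = ∏ i ∈ Ico 1 j, (i : ℝ) := by
          rw [prod_Ico_reflect (fun i : ℕ => (i : ℝ)) 1 (by omega)]; simp
      _ = (j - 1)! := by rw [← cast_prod, ← prod_Ico_id_eq_factorial, Nat.sub_add_cancel hj1]
  · calc ∏ i ∈ Ioc j d, |(j : ℝ) - i| = ∏ k ∈ range (d - j), ((k + 1 : ℕ) : ℝ) := by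
          rw [← Finset.Ico_add_one_add_one_eq_Ioc, prod_Ico_eq_prod_range]
          refine prod_congr (by congr 1; omega) fun k _ => ?_
          rw [abs_sub_comm, abs_of_nonneg (by push_cast; linarith)]; push_cast; ring
      _ = (d - j)! := by rw [← cast_prod, prod_range_add_one_eq_factorial]

noncomputable def lagrangeWeight (d j : ℕ) : ℝ :=
  ∏ i ∈ (Icc 1 d).erase j, ((d : ℝ) + i) / |(j : ℝ) - i|

theorem lagrangeWeight_nonneg (d j : ℕ) : 0 ≤ lagrangeWeight d j :=
  prod_nonneg fun _ _ => by positivity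

theorem add_mul_lagrangeWeight {d j : ℕ} (hj : j ∈ Icc 1 d) :
    (d + j) * lagrangeWeight d j = d * d.centralBinom * (d - 1).choose (j - 1) := by
  obtain ⟨hj1, hjd⟩ := mem_Icc.mp hj
  have hnum : (d ! : ℝ) * ∏ i ∈ Icc 1 d, ((d : ℝ) + i) = d.centralBinom * d ! * d ! := by
    have h := choose_mul_factorial_mul_factorial (by omega : d ≤ 2 * d)
    rw [two_mul, Nat.add_sub_cancel, ← two_mul, ← centralBinom_eq_two_mul_choose] at h
    exact_mod_cast (factorial_mul_prod_Icc_add d).trans h.symm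
  have hchoose : ((d - 1).choose (j - 1) : ℝ) * (j - 1)! * (d - j)! = (d - 1)! := by
    have h := choose_mul_factorial_mul_factorial (by omega : j - 1 ≤ d - 1)
    rw [show d - 1 - (j - 1) = d - j by omega] at h
    exact_mod_cast h
  have hfact : (d : ℝ) * (d - 1)! = d ! := by exact_mod_cast mul_factorial_pred (by omega)
  rw [lagrangeWeight, prod_div_distrib, ← mul_div_assoc,
    mul_prod_erase (Icc 1 d) (fun i : ℕ => (d : ℝ) + i) hj, prod_erase_Icc_abs_sub hj,
    div_eq_iff (by positivity)]
  refine mul_left_cancel₀ (cast_ne_zero.mpr (factorial_ne_zero d)) ?_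
  rw [hnum, ← hfact, ← hchoose]; ring

theorem sum_lagrangeWeight_le {d : ℕ} (hd : 1 ≤ d) :
    ∑ j ∈ Icc 1 d, lagrangeWeight d j ≤ (3 * exp 1) ^ d / (2 * π) := by
  have hterm : ∀ j ∈ Icc 1 d,
      ((d : ℝ) + 1) * lagrangeWeight d j ≤ d * d.centralBinom * (d - 1).choose (j - 1) :=
    fun j hj => by
      rw [← add_mul_lagrangeWeight hj]
      have hj1 : (1 : ℝ) ≤ j := by exact_mod_cast (mem_Icc.mp hj).1
      exact mul_le_mul_of_nonneg_right (by linarith) (lagrangeWeight_nonneg d j)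
  have hsum : ((d : ℝ) + 1) * ∑ j ∈ Icc 1 d, lagrangeWeight d j ≤
      d * d.centralBinom * 2 ^ (d - 1) := by
    rw [mul_sum]
    refine (sum_le_sum hterm).trans_eq ?_
    rw [← mul_sum, ← cast_sum, sum_Icc_choose_pred hd]; push_cast; ring
  have h8 : (8 : ℝ) ≤ 3 * exp 1 := by linarith [exp_one_gt_d9]
  rw [le_div_iff₀ (by positivity)]
  refine le_of_mul_le_mul_left ?_ (by positivity : (0 : ℝ) < d + 1)
  calc ((d : ℝ) + 1) * ((∑ j ∈ Icc 1 d, lagrangeWeight d j) * (2 * π))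
      ≤ d * d.centralBinom * 2 ^ (d - 1) * (2 * π) := by
        rw [← mul_assoc]; exact mul_le_mul_of_nonneg_right hsum (by positivity)
    _ = π * d * d.centralBinom * 2 ^ d := by
        rw [← Nat.sub_add_cancel hd, pow_succ, Nat.add_sub_cancel]; ring
    _ ≤ (d + 1) * 4 ^ d * 2 ^ d :=
        mul_le_mul_of_nonneg_right (pi_mul_centralBinom_le d) (by positivity)
    _ = (d + 1) * 8 ^ d := by rw [mul_assoc, ← mul_pow]; norm_num
    _ ≤ (d + 1) * (3 * exp 1) ^ d := by gcongr

/-- The Lagrange interpolation polynomial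
`p(x) = Σ_{j=1}^d λ_j ∏_{i≠j} (d·x − i)/(j − i)` of points `(j/d, λ_j)` with
`|λ_j| ≤ log b` has degree at most `d−1`, interpolates the data, and all of its
coefficients are bounded in absolute value by `(3e)^d (log b)/(2π)`. -/
theorem lagrange_interpolation_coeff_bound (d : ℕ) (hd : 1 ≤ d) (b : ℝ) (hb : 1 ≤ b)
    (lam : ℕ → ℝ) (hlam : ∀ j ∈ Finset.Icc 1 d, |lam j| ≤ Real.log b)
    (p : Polynomial ℝ)
    (hp : p = ∑ j ∈ Finset.Icc 1 d, Polynomial.C (lam j) *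
        ∏ i ∈ (Finset.Icc 1 d).erase j,
          Polynomial.C (((j : ℝ) - (i : ℝ))⁻¹) *
            (Polynomial.C (d : ℝ) * Polynomial.X - Polynomial.C (i : ℝ))) :
    p.natDegree ≤ d - 1 ∧
    (∀ i ∈ Finset.Icc 1 d, p.eval ((i : ℝ) / (d : ℝ)) = lam i) ∧
    (∀ ℓ : ℕ, |p.coeff ℓ| ≤ (3 * Real.exp 1) ^ d * Real.log b / (2 * π)) := by
  have hd0 : (d : ℝ) ≠ 0 := cast_ne_zero.mpr (by omega)
  set v : ℕ → ℝ := fun i => i / d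
  have hinj : Set.InjOn v (Icc 1 d) := fun i _ k _ h => by simpa [v, hd0] using h
  rw [← Lagrange.interpolate_div_const _ _ _ hd0] at hp
  subst hp
  refine ⟨natDegree_le_iff_degree_le.mpr
      ((Lagrange.degree_interpolate_le _ hinj).trans (by simp)),
    fun i hi => Lagrange.eval_interpolate_at_node _ hinj hi, fun ℓ => ?_⟩
  have hfactor (j i : ℕ) : |(v j - v i)⁻¹| * (1 + |v i|) = (d + i) / |(j : ℝ) - i| := by
    simpa [v, abs_div] using norm_inv_sub_div_mul_one_add hd0 (j : ℝ) i
  calc |(Lagrange.interpolate (Icc 1 d) v lam).coeff ℓ|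
      ≤ ∑ j ∈ Icc 1 d, |lam j| * lagrangeWeight d j := by
        simpa only [hfactor, Real.norm_eq_abs, lagrangeWeight] using
          Lagrange.norm_coeff_interpolate_le (Icc 1 d) v lam ℓ
    _ ≤ ∑ j ∈ Icc 1 d, log b * lagrangeWeight d j :=
        sum_le_sum fun j hj => mul_le_mul_of_nonneg_right (hlam j hj) (lagrangeWeight_nonneg d j)
    _ ≤ log b * ((3 * exp 1) ^ d / (2 * π)) := by
        rw [← mul_sum]; exact mul_le_mul_of_nonneg_left (sum_lagrangeWeight_le hd) (log_nonneg hb)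
    _ = (3 * Real.exp 1) ^ d * Real.log b / (2 * π) := by ring
end

section
/- For positive definite matrices ρ and σ on a finite-dimensional Hilbert space, the supremum over 0 ≤ M ≤ I of log(Tr[Mρ]/Tr[Mσ]) equals D_max(ρ‖σ) := log ‖σ^{−1/2} ρ σ^{−1/2}‖ = inf { λ ∈ ℝ : ρ ≤ e^λ σ }. -/
/-!
Write `σ = S * S` with `S = σ ^ (1/2)` and put `A = S⁻¹ ρ S⁻¹`. Conjugation by the unit `S⁻¹`
preserves the Loewner order, so `ρ ≤ c σ ↔ A ≤ c ↔ ‖A‖ ≤ c`; this is the infimum formula, and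
pairing `ρ ≤ ‖A‖ σ` with `M ≥ 0` under the trace bounds every ratio by `‖A‖`. The bound is
attained at a multiple of `S⁻¹ P S⁻¹`, where `P` projects onto an eigenvector of `A` for the
eigenvalue `‖A‖`. Since `ρ ≥ ε σ` for some `ε > 0`, the numerator `Tr[Mρ]` is positive whenever
`Tr[Mσ]` is, so the logarithm is never evaluated at its junk value `log 0 = 0`.
-/

open scoped Matrix.Norms.L2Operator
open Matrix
open scoped ComplexOrder

noncomputable def Matrix.PosSemidef.sqrt {n 𝕜 : Type*} [RCLike 𝕜] [Fintype n] [DecidableEq n]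
    {A : Matrix n n 𝕜} (hA : A.PosSemidef) : Matrix n n 𝕜 :=
  hA.1.eigenvectorUnitary.1 * diagonal ((↑) ∘ (Real.sqrt ∘ hA.1.eigenvalues)) *
  (star hA.1.eigenvectorUnitary : Matrix n n 𝕜)

open scoped MatrixOrder

section StarOrderedRing
variable {R : Type*} [Ring R] [StarRing R] [PartialOrder R] [StarOrderedRing R]

theorem Units.star_left_conjugate_le_conjugate_iff (u : Rˣ) {a b : R} :
    star (u : R) * a * u ≤ star (u : R) * b * u ↔ a ≤ b := by
  refine ⟨fun h ↦ ?_, fun h ↦ star_left_conjugate_le_conjugate h _⟩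
  have hcancel : ∀ x : R, star (↑u⁻¹ : R) * (star (u : R) * x * u) * ↑u⁻¹ = x := fun x ↦ by
    rw [← mul_assoc, ← mul_assoc, ← star_mul, Units.mul_inv, star_one, one_mul, mul_assoc,
      Units.mul_inv, mul_one]
  simpa only [hcancel] using star_left_conjugate_le_conjugate h (↑u⁻¹ : R)

end StarOrderedRing

section CStarAlgebra
variable {A : Type*} [CStarAlgebra A] [PartialOrder A] [StarOrderedRing A]

theorem IsStrictlyPositive.exists_pos_smul_le {a b : A} (ha : IsStrictlyPositive a)
    (hb : 0 ≤ b) : ∃ ε > (0 : ℝ), ε • b ≤ a := by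
  cases subsingleton_or_nontrivial A
  · exact ⟨1, one_pos, (Subsingleton.elim _ _).le⟩
  obtain ⟨r, hr, hra⟩ :=
    (CFC.exists_pos_algebraMap_le_iff ha.isSelfAdjoint).2 fun x hx ↦ ha.spectrum_pos hx
  refine ⟨r / (‖b‖ + 1), by positivity, ?_⟩
  have hεb : r / (‖b‖ + 1) * ‖b‖ ≤ r := by
    rw [div_mul_eq_mul_div, div_le_iff₀ (by positivity)]
    nlinarith [norm_nonneg b]
  calc (r / (‖b‖ + 1)) • b ≤ (r / (‖b‖ + 1)) • algebraMap ℝ A ‖b‖ :=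
        smul_le_smul_of_nonneg_left (IsSelfAdjoint.le_algebraMap_norm_self (.of_nonneg hb))
          (by positivity)
    _ = algebraMap ℝ A (r / (‖b‖ + 1) * ‖b‖) := by rw [map_mul, Algebra.smul_def]
    _ ≤ algebraMap ℝ A r := algebraMap_mono A hεb
    _ ≤ a := hra

theorem le_smul_star_mul_self_iff_norm_le (u : Aˣ) {a : A} (ha : 0 ≤ a) {c : ℝ} (hc : 0 ≤ c) :
    a ≤ c • (star (u : A) * u) ↔ ‖star (↑u⁻¹ : A) * a * ↑u⁻¹‖ ≤ c := by
  have hc1 : algebraMap ℝ A c = star (↑u⁻¹ : A) * (c • (star (u : A) * u)) * ↑u⁻¹ := by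
    rw [mul_smul_comm, smul_mul_assoc, ← mul_assoc, ← star_mul, Units.mul_inv,
      star_one, one_mul, Units.mul_inv, Algebra.algebraMap_eq_smul_one]
  rw [CStarAlgebra.norm_le_iff_le_algebraMap _ hc (star_left_conjugate_nonneg ha _), hc1,
    Units.star_left_conjugate_le_conjugate_iff]

theorem inv_norm_smul_le_one {a : A} (ha : 0 ≤ a) : ‖a‖⁻¹ • a ≤ 1 := by
  have h := (CStarAlgebra.norm_le_iff_le_algebraMap (‖a‖⁻¹ • a) zero_le_one
    (smul_nonneg (inv_nonneg.2 (norm_nonneg a)) ha)).1 ?_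
  · simpa using h
  rw [norm_smul, norm_inv, norm_norm]
  exact inv_mul_le_one_of_le₀ le_rfl (norm_nonneg a)

end CStarAlgebra

namespace Matrix
variable {n 𝕜 : Type*} [Fintype n] [RCLike 𝕜]

theorem re_trace_mul_smul (M B : Matrix n n 𝕜) (r : ℝ) :
    RCLike.re (M * (r • B)).trace = r * RCLike.re (M * B).trace := by
  rw [mul_smul_comm, trace_smul, RCLike.smul_re]

variable [DecidableEq n]

theorem PosSemidef.sqrt_eq_cfcSqrt {A : Matrix n n 𝕜} (hA : A.PosSemidef) :
    hA.sqrt = CFC.sqrt A := by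
  rw [CFC.sqrt_eq_cfc, cfc_nnreal_eq_real _ A, hA.1.cfc_eq]
  simp only [PosSemidef.sqrt, IsHermitian.cfc, Unitary.conjStarAlgAut_apply]
  congr 4
  funext x
  exact Real.sqrt.eq_1 _

theorem re_trace_mul_le_of_le {M B C : Matrix n n 𝕜} (hM : 0 ≤ M) (hBC : B ≤ C) :
    RCLike.re (M * B).trace ≤ RCLike.re (M * C).trace := by
  obtain ⟨X, rfl⟩ := CStarAlgebra.nonneg_iff_eq_star_mul_self.mp hM
  have h : 0 ≤ (X * (C - B) * Xᴴ).trace :=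
    ((le_iff.mp hBC).mul_mul_conjTranspose_same X).trace_nonneg
  rw [← trace_mul_comm, ← mul_assoc, ← star_eq_conjTranspose, mul_sub, trace_sub] at h
  simpa [sub_nonneg] using (RCLike.nonneg_iff.mp h).1

theorem exists_nonneg_trace_eq_one_mul_eq_norm_smul [Nonempty n] {A : Matrix n n ℂ}
    (hA : 0 ≤ A) : ∃ P : Matrix n n ℂ, 0 ≤ P ∧ P.trace = 1 ∧ A * P = ‖A‖ • P := by
  have hAh : A.IsHermitian := hA.posSemidef.1
  obtain ⟨i, hi⟩ : ‖A‖ ∈ Set.range hAh.eigenvalues := by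
    rw [← hAh.spectrum_real_eq_range_eigenvalues]
    exact CStarAlgebra.norm_mem_spectrum_of_nonneg hA
  refine ⟨vecMulVec ⇑(hAh.eigenvectorBasis i) (star ⇑(hAh.eigenvectorBasis i)),
    (posSemidef_vecMulVec_self_star _).nonneg, ?_, ?_⟩
  · rw [trace_vecMulVec, ← EuclideanSpace.inner_eq_star_dotProduct,
      inner_self_eq_one_of_norm_eq_one (hAh.eigenvectorBasis.orthonormal.1 i)]
  · rw [mul_vecMulVec, hAh.mulVec_eigenvectorBasis, hi, smul_vecMulVec]

theorem re_trace_mul_le_norm_mul {ρ M : Matrix n n ℂ} (hρ : 0 ≤ ρ) (hM : 0 ≤ M)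
    (u : (Matrix n n ℂ)ˣ) :
    (M * ρ).trace.re ≤ ‖star (↑u⁻¹ : Matrix n n ℂ) * ρ * (↑u⁻¹ : Matrix n n ℂ)‖ *
      (M * (star (u : Matrix n n ℂ) * u)).trace.re := by
  simpa only [re_trace_mul_smul, RCLike.re_to_complex] using re_trace_mul_le_of_le hM
    ((le_smul_star_mul_self_iff_norm_le u hρ (norm_nonneg _)).2 le_rfl)

theorem re_trace_mul_pos_of_posDef {ρ σ M : Matrix n n ℂ} (hρ : ρ.PosDef) (hσ : 0 ≤ σ)
    (hM : 0 ≤ M) (h : 0 < (M * σ).trace.re) : 0 < (M * ρ).trace.re := by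
  obtain ⟨ε, hε, hle⟩ := hρ.isStrictlyPositive.exists_pos_smul_le hσ
  have := re_trace_mul_le_of_le hM hle
  simp only [re_trace_mul_smul, RCLike.re_to_complex] at this
  exact (mul_pos hε h).trans_le this

theorem exists_trace_ratio_eq_norm [Nonempty n] {ρ : Matrix n n ℂ} (hρ : 0 ≤ ρ)
    (u : (Matrix n n ℂ)ˣ) :
    ∃ M : Matrix n n ℂ, 0 ≤ M ∧ M ≤ 1 ∧ 0 < (M * (star (u : Matrix n n ℂ) * u)).trace.re ∧
      (M * ρ).trace.re =
        ‖star (↑u⁻¹ : Matrix n n ℂ) * ρ * (↑u⁻¹ : Matrix n n ℂ)‖ *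
          (M * (star (u : Matrix n n ℂ) * u)).trace.re := by
  set T : Matrix n n ℂ := ↑u⁻¹
  obtain ⟨P, hP, hPtr, hAP⟩ :=
    exists_nonneg_trace_eq_one_mul_eq_norm_smul (star_left_conjugate_nonneg hρ T)
  set M₀ := T * P * star T
  have htr (B : Matrix n n ℂ) : (M₀ * B).trace = (P * (star T * B * T)).trace := by
    simp only [M₀, mul_assoc]
    rw [trace_mul_comm]
    simp only [mul_assoc]
  have hTσT : star T * (star (u : Matrix n n ℂ) * u) * T = 1 := by
    rw [← mul_assoc, ← star_mul, Units.mul_inv, star_one, one_mul, Units.mul_inv]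
  have hσtr : (M₀ * (star (u : Matrix n n ℂ) * u)).trace = 1 := by
    rw [htr, hTσT, mul_one, hPtr]
  have hρtr : (M₀ * ρ).trace = ‖star T * ρ * T‖ := by
    rw [htr, trace_mul_comm, hAP, trace_smul, hPtr, Complex.real_smul, mul_one]
  have hM₀ : M₀ ≠ 0 := by
    intro h
    simp [h] at hσtr
  refine ⟨‖M₀‖⁻¹ • M₀, smul_nonneg (by positivity) (star_right_conjugate_nonneg hP T),
    inv_norm_smul_le_one (star_right_conjugate_nonneg hP T), ?_, ?_⟩
  · rw [smul_mul_assoc, trace_smul, Complex.smul_re, hσtr, Complex.one_re, smul_eq_mul, mul_one]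
    exact inv_pos.2 (norm_pos_iff.2 hM₀)
  · simp only [smul_mul_assoc, trace_smul, Complex.smul_re, hσtr, hρtr, Complex.ofReal_re,
      Complex.one_re, smul_eq_mul]
    ring

theorem PosDef.exists_units_sqrt {σ : Matrix n n ℂ} (hσ : σ.PosDef) :
    ∃ u : (Matrix n n ℂ)ˣ, σ = star (u : Matrix n n ℂ) * u ∧ ∀ ρ : Matrix n n ℂ,
      (hσ.posSemidef.sqrt)⁻¹ * ρ * (hσ.posSemidef.sqrt)⁻¹ =
        star (↑u⁻¹ : Matrix n n ℂ) * ρ * (↑u⁻¹ : Matrix n n ℂ) := by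
  obtain ⟨u, hu⟩ := (IsStrictlyPositive.sqrt σ hσ.isStrictlyPositive).isUnit
  have hS : star (CFC.sqrt σ) = CFC.sqrt σ := (CFC.sqrt_nonneg σ).isSelfAdjoint.star_eq
  refine ⟨u, by rw [hu, hS, CFC.sqrt_mul_sqrt_self σ hσ.posSemidef.nonneg], fun ρ ↦ ?_⟩
  rw [hσ.posSemidef.sqrt_eq_cfcSqrt, coe_units_inv, hu, star_eq_conjTranspose,
    conjTranspose_nonsing_inv, ← star_eq_conjTranspose, hS]

theorem isGreatest_log_trace_ratio [Nonempty n] {ρ σ : Matrix n n ℂ} (hρ : ρ.PosDef)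
    (u : (Matrix n n ℂ)ˣ) (hσu : σ = star (u : Matrix n n ℂ) * u) :
    IsGreatest {x : ℝ | ∃ M : Matrix n n ℂ, M.PosSemidef ∧ (1 - M).PosSemidef ∧
        0 < ((M * σ).trace).re ∧ x = Real.log (((M * ρ).trace).re / ((M * σ).trace).re)}
      (Real.log ‖star (↑u⁻¹ : Matrix n n ℂ) * ρ * (↑u⁻¹ : Matrix n n ℂ)‖) := by
  subst hσu
  constructor
  · obtain ⟨M, hM0, hM1, hpos, heq⟩ := exists_trace_ratio_eq_norm hρ.posSemidef.nonneg u
    exact ⟨M, hM0.posSemidef, hM1, hpos, by rw [heq, mul_div_cancel_right₀ _ hpos.ne']⟩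
  · rintro _ ⟨M, hM0, -, hpos, rfl⟩
    have hρpos := re_trace_mul_pos_of_posDef hρ (star_mul_self_nonneg _) hM0.nonneg hpos
    exact Real.log_le_log (div_pos hρpos hpos)
      ((div_le_iff₀ hpos).2 (re_trace_mul_le_norm_mul hρ.posSemidef.nonneg hM0.nonneg u))

theorem setOf_exp_smul_sub_posSemidef_eq_Ici [Nonempty n] {ρ σ : Matrix n n ℂ} (hρ : ρ.PosDef)
    (u : (Matrix n n ℂ)ˣ) (hσu : σ = star (u : Matrix n n ℂ) * u) :
    {lam : ℝ | ((Real.exp lam : ℂ) • σ - ρ).PosSemidef} =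
      Set.Ici (Real.log ‖star (↑u⁻¹ : Matrix n n ℂ) * ρ * (↑u⁻¹ : Matrix n n ℂ)‖) := by
  have hA : 0 < ‖star (↑u⁻¹ : Matrix n n ℂ) * ρ * (↑u⁻¹ : Matrix n n ℂ)‖ := norm_pos_iff.2
    (u⁻¹.isUnit.isStrictlyPositive_star_left_conjugate_iff.2 hρ.isStrictlyPositive).isUnit.ne_zero
  ext lam
  rw [Set.mem_ofPred_eq, ← le_iff, ← Complex.coe_algebraMap, ← algebra_compatible_smul, hσu,
    le_smul_star_mul_self_iff_norm_le u hρ.posSemidef.nonneg (Real.exp_pos lam).le,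
    Set.mem_Ici, Real.log_le_iff_le_exp hA]

end Matrix

/-- Variational characterization of the max-relative entropy: for positive
definite `ρ, σ`, the supremum of `log(Tr[Mρ]/Tr[Mσ])` over Hermitian `M` with
`0 ≤ M ≤ I` (and `Tr[Mσ] > 0`) equals `log ‖σ^{-1/2} ρ σ^{-1/2}‖`, which in
turn equals `inf {λ : ρ ≤ e^λ σ}` in the Loewner order. -/
theorem dmax_variational {d : ℕ} (hd : 0 < d) (ρ σ : Matrix (Fin d) (Fin d) ℂ)
    (hρ : ρ.PosDef) (hσ : σ.PosDef) :
    sSup {x : ℝ | ∃ M : Matrix (Fin d) (Fin d) ℂ, M.PosSemidef ∧ (1 - M).PosSemidef ∧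
        0 < ((M * σ).trace).re ∧
        x = Real.log (((M * ρ).trace).re / ((M * σ).trace).re)}
      = Real.log ‖(hσ.posSemidef.sqrt)⁻¹ * ρ * (hσ.posSemidef.sqrt)⁻¹‖ ∧
    Real.log ‖(hσ.posSemidef.sqrt)⁻¹ * ρ * (hσ.posSemidef.sqrt)⁻¹‖
      = sInf {lam : ℝ | ((Real.exp lam : ℂ) • σ - ρ).PosSemidef} := by
  have : Nonempty (Fin d) := ⟨⟨0, hd⟩⟩
  obtain ⟨u, hσu, hconj⟩ := hσ.exists_units_sqrt
  rw [hconj, setOf_exp_smul_sub_posSemidef_eq_Ici hρ u hσu, csInf_Ici]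
  exact ⟨(isGreatest_log_trace_ratio hρ u hσu).csSup_eq, rfl⟩
end
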